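/- Let ρ be a probability measure on ℝ^d with finite second moments, with mean μ := μ(ρ) and covariance Σ := Cov(ρ), let C ∈ ℝ^{d×d} be symmetric, and let k₂(x,y) = (⟨x,y⟩ + 1)² be the quadratic kernel. Then the induced kernel G_{ρ,C}(x,y) := ∫ ⟨∇_z k₂(x,z), C ∇_z k₂(y,z)⟩ dρ(z) is given in closed form by G_{ρ,C}(x,y) = 4 ⟨x, C y⟩ · ( xᵀ(Σ + μμᵀ)y + ⟨x,μ⟩ + ⟨y,μ⟩ + 1 ) for all x, y ∈ ℝ^d. -/
import Mathlib


open MeasureTheory Matrix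

/-- The mean `μ(ρ)` of a measure on `ℝ^d` (coordinatewise). -/
noncomputable def meanVec {d : ℕ} (ρ : Measure (Fin d → ℝ)) : Fin d → ℝ :=
  fun i => ∫ x, x i ∂ρ

/-- The covariance matrix `Cov(ρ) = ∫ (x-μ)(x-μ)ᵀ dρ(x)`. -/
noncomputable def covMatrix {d : ℕ} (ρ : Measure (Fin d → ℝ)) : Matrix (Fin d) (Fin d) ℝ :=
  Matrix.of fun i j => ∫ x, (x i - meanVec ρ i) * (x j - meanVec ρ j) ∂ρ

/-- For the quadratic kernel `k₂` (whose gradient in the second argument is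
`∇_z k₂(x,z) = 2(⟨x,z⟩+1)x`), the induced kernel
`G_{ρ,C}(x,y) = ∫ ⟨∇_z k₂(x,z), C ∇_z k₂(y,z)⟩ dρ(z)` has the closed form
`4⟨x,Cy⟩ (xᵀ(Σ+μμᵀ)y + ⟨x,μ⟩ + ⟨y,μ⟩ + 1)`. -/
theorem stmt11 {d : ℕ} (ρ : Measure (Fin d → ℝ)) [IsProbabilityMeasure ρ]
    (hρ : Integrable (fun x => ‖x‖ ^ 2) ρ)
    (C : Matrix (Fin d) (Fin d) ℝ) (hC : C.IsSymm) :
    ∀ x y : Fin d → ℝ,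
      (∫ z, (2 * (x ⬝ᵥ z + 1)) • x ⬝ᵥ C.mulVec ((2 * (y ⬝ᵥ z + 1)) • y) ∂ρ)
        = 4 * (x ⬝ᵥ C.mulVec y) *
          (x ⬝ᵥ (covMatrix ρ + vecMulVec (meanVec ρ) (meanVec ρ)).mulVec y
            + x ⬝ᵥ meanVec ρ + y ⬝ᵥ meanVec ρ + 1) := by
  intro x y
  set m : Fin d → ℝ := meanVec ρ with hm
  have hmeas : ∀ i, AEStronglyMeasurable (fun z : Fin d → ℝ => z i) ρ :=
    fun i => (continuous_apply i).aestronglyMeasurable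
  have hzi : ∀ i, Integrable (fun z : Fin d → ℝ => z i) ρ := by
    intro i
    refine (hρ.add (integrable_const 1)).mono' (hmeas i) (ae_of_all _ fun z => ?_)
    have h1 : ‖z i‖ ≤ ‖z‖ := norm_le_pi_norm z i
    have h2 : (0:ℝ) ≤ ‖z‖ := norm_nonneg z
    simp only [Pi.add_apply]
    nlinarith [h1, h2]
  have hzij : ∀ i j, Integrable (fun z : Fin d → ℝ => z i * z j) ρ := by
    intro i j
    refine hρ.mono' ((hmeas i).mul (hmeas j)) (ae_of_all _ fun z => ?_)
    have h1 : ‖z i‖ ≤ ‖z‖ := norm_le_pi_norm z i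
    have h2 : ‖z j‖ ≤ ‖z‖ := norm_le_pi_norm z j
    have h3 : (0:ℝ) ≤ ‖z i‖ := norm_nonneg _
    have h4 : (0:ℝ) ≤ ‖z j‖ := norm_nonneg _
    rw [norm_mul]
    nlinarith [h1, h2, h3, h4]
  have hconst : ∀ c : ℝ, ∫ _z, c ∂ρ = c := by
    intro c; simp [measure_univ]
  have hmean : ∀ i, ∫ z, z i ∂ρ = m i := fun i => rfl
  have hcov : ∀ i j, ∫ z, z i * z j ∂ρ = covMatrix ρ i j + m i * m j := by
    intro i j
    have h1 : covMatrix ρ i j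
        = ∫ z, (z i * z j - m i * z j - z i * m j + m i * m j) ∂ρ := by
      simp only [covMatrix, Matrix.of_apply, ← hm]
      congr 1; funext z; ring
    have hA1 : Integrable (fun z : Fin d → ℝ => z i * z j - m i * z j) ρ :=
      (hzij i j).sub ((hzi j).const_mul (m i))
    have hA2 : Integrable (fun z : Fin d → ℝ => z i * z j - m i * z j - z i * m j) ρ :=
      hA1.sub ((hzi i).mul_const (m j))
    have h2 : ∫ z, (z i * z j - m i * z j - z i * m j + m i * m j) ∂ρ
        = (∫ z, z i * z j ∂ρ) - m i * m j - m i * m j + m i * m j := by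
      rw [integral_add hA2 (integrable_const _),
          integral_sub hA1 ((hzi i).mul_const (m j)),
          integral_sub (hzij i j) ((hzi j).const_mul (m i)),
          integral_const_mul, integral_mul_const, hmean, hmean, hconst]
      all_goals ring
    rw [h1, h2]; ring
  -- rewrite the integrand
  have key : ∀ z : Fin d → ℝ,
      (2 * (x ⬝ᵥ z + 1)) • x ⬝ᵥ C.mulVec ((2 * (y ⬝ᵥ z + 1)) • y)
        = (4 * (x ⬝ᵥ C.mulVec y)) * ((x ⬝ᵥ z) * (y ⬝ᵥ z) + x ⬝ᵥ z + y ⬝ᵥ z + 1) := by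
    intro z
    rw [Matrix.mulVec_smul, smul_dotProduct, dotProduct_smul, smul_eq_mul, smul_eq_mul]
    ring
  rw [show (∫ z, (2 * (x ⬝ᵥ z + 1)) • x ⬝ᵥ C.mulVec ((2 * (y ⬝ᵥ z + 1)) • y) ∂ρ)
      = ∫ z, (4 * (x ⬝ᵥ C.mulVec y)) * ((x ⬝ᵥ z) * (y ⬝ᵥ z) + x ⬝ᵥ z + y ⬝ᵥ z + 1) ∂ρ
      from integral_congr_ae (ae_of_all _ key), integral_const_mul]
  -- integrability of the pieces
  have hdotx : ∀ v : Fin d → ℝ, Integrable (fun z : Fin d → ℝ => v ⬝ᵥ z) ρ := by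
    intro v
    simp only [dotProduct]
    exact integrable_finset_sum _ fun i _ => (hzi i).const_mul (v i)
  have hexpand : (fun z : Fin d → ℝ => (x ⬝ᵥ z) * (y ⬝ᵥ z))
      = fun z => ∑ i, ∑ j, (x i * y j) * (z i * z j) := by
    funext z
    rw [dotProduct, dotProduct, Finset.sum_mul_sum]
    refine Finset.sum_congr rfl fun i _ => Finset.sum_congr rfl fun j _ => by ring
  have hprod : Integrable (fun z : Fin d → ℝ => (x ⬝ᵥ z) * (y ⬝ᵥ z)) ρ := by
    rw [hexpand]
    exact integrable_finset_sum _ fun i _ =>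
      integrable_finset_sum _ fun j _ => (hzij i j).const_mul _
  -- compute the integrals
  have hix : ∀ v : Fin d → ℝ, ∫ z, v ⬝ᵥ z ∂ρ = v ⬝ᵥ m := by
    intro v
    simp only [dotProduct]
    rw [integral_finset_sum _ fun i _ => (hzi i).const_mul (v i)]
    exact Finset.sum_congr rfl fun i _ => by rw [integral_const_mul, hmean]
  have hixy : ∫ z, (x ⬝ᵥ z) * (y ⬝ᵥ z) ∂ρ
      = x ⬝ᵥ (covMatrix ρ + vecMulVec m m).mulVec y := by
    rw [hexpand, integral_finset_sum _ fun i _ =>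
      integrable_finset_sum _ fun j _ => (hzij i j).const_mul _]
    have : ∀ i, ∫ z, ∑ j, (x i * y j) * (z i * z j) ∂ρ
        = ∑ j, (x i * y j) * (covMatrix ρ i j + m i * m j) := by
      intro i
      rw [integral_finset_sum _ fun j _ => (hzij i j).const_mul _]
      exact Finset.sum_congr rfl fun j _ => by rw [integral_const_mul, hcov]
    simp only [this, dotProduct, mulVec, Matrix.add_apply, vecMulVec_apply, dotProduct]
    refine Finset.sum_congr rfl fun i _ => ?_
    rw [Finset.mul_sum]
    exact Finset.sum_congr rfl fun j _ => by ring
  have hI1 : Integrable (fun z : Fin d → ℝ => (x ⬝ᵥ z) * (y ⬝ᵥ z) + x ⬝ᵥ z) ρ :=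
    hprod.add (hdotx x)
  have hI2 : Integrable (fun z : Fin d → ℝ => (x ⬝ᵥ z) * (y ⬝ᵥ z) + x ⬝ᵥ z + y ⬝ᵥ z) ρ :=
    hI1.add (hdotx y)
  rw [show (∫ z, ((x ⬝ᵥ z) * (y ⬝ᵥ z) + x ⬝ᵥ z + y ⬝ᵥ z + 1) ∂ρ)
      = (∫ z, (x ⬝ᵥ z) * (y ⬝ᵥ z) ∂ρ) + (∫ z, x ⬝ᵥ z ∂ρ) + (∫ z, y ⬝ᵥ z ∂ρ) + 1 by
    rw [integral_add hI2 (integrable_const _),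
        integral_add hI1 (hdotx y),
        integral_add hprod (hdotx x), hconst]]
  rw [hixy, hix, hix]
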